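/- Let d ≥ 2 with char(k) ∤ d, and let f = x^d y + y^d z + z^d w ∈ S = k[x,y,z,w] with gradient ideal J = (x^{d−1}y, x^d + d y^{d−1}z, y^d + d z^{d−1}w, z^d). Then the saturation J^sat = J : (x,y,z,w)^∞ equals (J, x^{d−1}z^{d−1}), and J^sat/J is the socle of S/J, so the socle degree of S/J is 2d − 2. -/

import Mathlib

/-!
Write `K = J + (x^{d-1} z^{d-1})`. Explicit syzygies give `m K ⊆ J`; the one for `w` divides
by `d`. Hence `K ⊆ J : m ⊆ J : m^∞`, and everything reduces to showing that `w` is a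
nonzerodivisor on `S / K`. For this we use a normal form: rewriting `x^d ↦ -d y^{d-1} z` and
`y^d ↦ -d z^{d-1} w` and discarding monomials divisible by `z^d`, `x^{d-1} y` or
`x^{d-1} z^{d-1}` defines a `k`-linear map `L` with `s ≡ L s (mod K)` and `L K = 0`, so that
`ker L = K`. Since `w` occurs in no rewriting rule, `L (w s) = w L s`, and `w s ∈ K` forces
`L s = 0`. Finally `x^{d-1} z^{d-1} ∉ J` because no monomial of a generator of `J` divides it.
-/

open MvPolynomial

theorem Ideal.mem_of_mul_mem_of_normalForm {R : Type*} [CommRing R] {K : Ideal R} {a : R}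
    (L : R → R) (hLK : ∀ s ∈ K, L s = 0) (hsub : ∀ s, s - L s ∈ K)
    (hLa : ∀ s, L (a * s) = a * L s) (ha : a ∈ nonZeroDivisors R) {s : R} (hs : a * s ∈ K) :
    s ∈ K := by
  have hLs : L s = 0 := by
    rw [← mul_left_mem_nonZeroDivisors_eq_zero_iff ha, ← hLa]
    exact hLK _ hs
  simpa [hLs] using hsub s

section CommSemiring

variable {R : Type*} [CommSemiring R] {J K m : Ideal R} {a : R}

theorem Ideal.exists_forall_pow_mul_mem_iff_of_regular (hJK : J ≤ K) (hmK : m * K ≤ J)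
    (ham : a ∈ m) (hreg : ∀ s, a * s ∈ K → s ∈ K) (s : R) :
    (∃ N : ℕ, ∀ g ∈ m ^ N, g * s ∈ J) ↔ s ∈ K := by
  refine ⟨fun ⟨N, hN⟩ => ?_,
    fun hs => ⟨1, fun g hg => hmK (Ideal.mul_mem_mul (by simpa using hg) hs)⟩⟩
  have hpow : ∀ n, a ^ n * s ∈ K → s ∈ K := by
    intro n
    induction n with
    | zero => simp
    | succ n ih => exact fun h => ih (hreg _ (by rwa [pow_succ', mul_assoc] at h))
  exact hpow N (hJK (hN _ (Ideal.pow_mem_pow ham N)))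

theorem Ideal.forall_mul_mem_iff_of_regular (hJK : J ≤ K) (hmK : m * K ≤ J) (ham : a ∈ m)
    (hreg : ∀ s, a * s ∈ K → s ∈ K) (s : R) :
    (∀ g ∈ m, g * s ∈ J) ↔ s ∈ K :=
  ⟨fun h => hreg s (hJK (h a ham)), fun hs _ hg => hmK (Ideal.mul_mem_mul hg hs)⟩

theorem Ideal.map_eq_zero_of_mem_span {M F : Type*} [AddCommMonoid M]
    [FunLike F R M] [AddMonoidHomClass F R M] (L : F) {S : Set R}
    (hS : ∀ g ∈ S, ∀ h, L (h * g) = 0) {s : R} (hs : s ∈ Ideal.span S) : L s = 0 := by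
  suffices ∀ h, L (h * s) = 0 by simpa using this 1
  induction hs using Submodule.span_induction with
  | mem g hg => exact hS g hg
  | zero => simp
  | add u v _ _ hu hv => exact fun h => by rw [mul_add, map_add, hu, hv, add_zero]
  | smul a u _ hu => exact fun h => by rw [smul_eq_mul, ← mul_assoc]; exact hu _

end CommSemiring

namespace ChainPolynomial

noncomputable section

def exps (a b c e : ℕ) : Fin 4 →₀ ℕ := Finsupp.equivFunOnFinite.symm ![a, b, c, e]

@[simp] lemma exps_apply_zero (a b c e : ℕ) : exps a b c e 0 = a := rfl
@[simp] lemma exps_apply_one (a b c e : ℕ) : exps a b c e 1 = b := rfl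
@[simp] lemma exps_apply_two (a b c e : ℕ) : exps a b c e 2 = c := rfl
@[simp] lemma exps_apply_three (a b c e : ℕ) : exps a b c e 3 = e := rfl

lemma exps_le_exps_iff {a b c e a' b' c' e' : ℕ} :
    exps a b c e ≤ exps a' b' c' e' ↔ a ≤ a' ∧ b ≤ b' ∧ c ≤ c' ∧ e ≤ e' := by
  simp [Finsupp.le_def, Fin.forall_fin_succ]

lemma exps_eq_self (n : Fin 4 →₀ ℕ) : exps (n 0) (n 1) (n 2) (n 3) = n := by
  ext i; fin_cases i <;> rfl

variable {R : Type*} [CommSemiring R]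

def mon (a b c e : ℕ) : MvPolynomial (Fin 4) R := X 0 ^ a * X 1 ^ b * X 2 ^ c * X 3 ^ e

lemma monomial_exps (a b c e : ℕ) (r : R) : monomial (exps a b c e) r = C r * mon a b c e := by
  rw [monomial_eq, Finsupp.prod_fintype _ _ (by simp), Fin.prod_univ_four]
  simp [mon, mul_assoc]

theorem induction_on_mon {P : MvPolynomial (Fin 4) R → Prop} (p : MvPolynomial (Fin 4) R)
    (hmon : ∀ r a b c e, P (C r * mon a b c e)) (hadd : ∀ p q, P p → P q → P (p + q)) :
    P p := by
  induction p using MvPolynomial.induction_on' with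
  | monomial n r => rw [← exps_eq_self n, monomial_exps]; exact hmon ..
  | add p q hp hq => exact hadd p q hp hq

lemma mon_eq_monomial (a b c e : ℕ) :
    (mon a b c e : MvPolynomial (Fin 4) R) = monomial (exps a b c e) 1 := by
  rw [monomial_exps, C_1, one_mul]

lemma coeff_mul_mon_eq_zero {μ : Fin 4 →₀ ℕ} {a b c e : ℕ} (h : ¬ exps a b c e ≤ μ)
    (p : MvPolynomial (Fin 4) R) : coeff μ (p * mon a b c e) = 0 := by
  rw [mon_eq_monomial, coeff_mul_monomial', if_neg h]

/- Using `x^d ≡ -d y^{d-1} z` (`a / d` times) and then `y^d ≡ -d z^{d-1} w`, the monomial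
`x^a y^b z^c w^e` becomes `(-d)^nfCount x^(a % d) y^(yExp % d) z^zExp w^wExp`, which is then
discarded if it is `Reducible`, i.e. divisible by `z^d`, `x^{d-1} y` or `x^{d-1} z^{d-1}`. -/
def yExp (d a b : ℕ) : ℕ := b + a / d * (d - 1)
def zExp (d a b c : ℕ) : ℕ := c + a / d + yExp d a b / d * (d - 1)
def wExp (d a b e : ℕ) : ℕ := e + yExp d a b / d
def nfCount (d a b : ℕ) : ℕ := a / d + yExp d a b / d

def Reducible (d a b c : ℕ) : Prop := d ≤ c ∨ d - 1 ≤ a ∧ (1 ≤ b ∨ d - 1 ≤ c)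

instance (d a b c : ℕ) : Decidable (Reducible d a b c) := by
  unfold Reducible; infer_instance

variable (k : Type*) [Field k] (d : ℕ)

def nfMon (a b c e : ℕ) : MvPolynomial (Fin 4) k :=
  if Reducible d (a % d) (yExp d a b % d) (zExp d a b c) then 0
  else (-(d : k)) ^ nfCount d a b • mon (a % d) (yExp d a b % d) (zExp d a b c) (wExp d a b e)

variable {k d}

lemma nfMon_eq_neg_smul {a b c e a' b' c' e' : ℕ} (hx : a % d = a' % d)
    (hy : yExp d a b % d = yExp d a' b' % d) (hz : zExp d a b c = zExp d a' b' c')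
    (hw : wExp d a b e = wExp d a' b' e') (hN : nfCount d a b = nfCount d a' b' + 1) :
    nfMon k d a b c e = -(d : k) • nfMon k d a' b' c' e' := by
  unfold nfMon
  rw [hx, hy, hz, hw, hN]
  split_ifs
  · rw [smul_zero]
  · rw [pow_succ', mul_smul]

lemma nfMon_x_add (hd : 0 < d) (a b c e : ℕ) :
    nfMon k d (a + d) b c e = -(d : k) • nfMon k d a (b + (d - 1)) (c + 1) e := by
  have hq : (a + d) / d = a / d + 1 := Nat.add_div_right a hd
  have hy : yExp d (a + d) b = yExp d a (b + (d - 1)) := by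
    rw [yExp, yExp, hq]; ring
  apply nfMon_eq_neg_smul (Nat.add_mod_right a d) (by rw [hy])
  · rw [zExp, zExp, hy, hq]; ring
  · rw [wExp, wExp, hy]
  · rw [nfCount, nfCount, hy, hq]; ring

lemma nfMon_y_add (hd : 0 < d) (a b c e : ℕ) :
    nfMon k d a (b + d) c e = -(d : k) • nfMon k d a b (c + (d - 1)) (e + 1) := by
  have hy : yExp d a (b + d) = yExp d a b + d := by rw [yExp, yExp]; ring
  have hq : yExp d a (b + d) / d = yExp d a b / d + 1 := by rw [hy, Nat.add_div_right _ hd]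
  apply nfMon_eq_neg_smul rfl (by rw [hy, Nat.add_mod_right])
  · rw [zExp, zExp, hq]; ring
  · rw [wExp, wExp, hq]; ring
  · rw [nfCount, nfCount, hq]; ring

lemma nfMon_w_succ (a b c e : ℕ) : nfMon k d a b c (e + 1) = X 3 * nfMon k d a b c e := by
  have hw : wExp d a b (e + 1) = wExp d a b e + 1 := by rw [wExp, wExp]; ring
  unfold nfMon
  split_ifs
  · rw [mul_zero]
  · rw [hw, mul_smul_comm, mon, mon, pow_succ]; ring_nf

lemma nfMon_of_lt {a b : ℕ} (ha : a < d) (hb : b < d) (c e : ℕ) :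
    nfMon k d a b c e = if Reducible d a b c then 0 else mon a b c e := by
  have hy : yExp d a b = b := by simp [yExp, Nat.div_eq_of_lt ha]
  simp [nfMon, nfCount, zExp, wExp, hy, Nat.div_eq_of_lt ha, Nat.div_eq_of_lt hb,
    Nat.mod_eq_of_lt ha, Nat.mod_eq_of_lt hb]

lemma sub_one_le_div_mul_sub_one (hd : 0 < d) {n : ℕ} (h : d ≤ n) : d - 1 ≤ n / d * (d - 1) :=
  Nat.le_mul_of_pos_left _ (Nat.div_pos h hd)

lemma reducible_nf_of_reducible (hd : 0 < d) {a b c : ℕ} (h : Reducible d a b c) :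
    Reducible d (a % d) (yExp d a b % d) (zExp d a b c) := by
  unfold Reducible at h ⊢
  rcases lt_or_ge a d with ha | ha
  · have hq : a / d = 0 := Nat.div_eq_of_lt ha
    have hy : yExp d a b = b := by simp [yExp, hq]
    have hz : zExp d a b c = c + b / d * (d - 1) := by simp [zExp, hq, hy]
    rw [Nat.mod_eq_of_lt ha, hy, hz]
    rcases lt_or_ge b d with hb | hb
    · rw [Nat.mod_eq_of_lt hb]
      omega
    · have := sub_one_le_div_mul_sub_one hd hb
      omega
  · have hq : 1 ≤ a / d := Nat.div_pos ha hd
    have hz : c + a / d + yExp d a b / d * (d - 1) = zExp d a b c := rfl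
    rcases h with hc | ⟨-, hb | hc⟩
    · omega
    · have := sub_one_le_div_mul_sub_one hd (n := yExp d a b)
        (by have := Nat.mul_le_mul_right (d - 1) hq; unfold yExp; omega)
      omega
    · omega

lemma nfMon_eq_zero_of_reducible (hd : 0 < d) {a b c : ℕ} (h : Reducible d a b c) (e : ℕ) :
    nfMon k d a b c e = 0 :=
  if_pos (reducible_nf_of_reducible hd h)

variable (k d)

def normalForm : MvPolynomial (Fin 4) k →ₗ[k] MvPolynomial (Fin 4) k :=
  (basisMonomials (Fin 4) k).constr k fun n => nfMon k d (n 0) (n 1) (n 2) (n 3)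

def jacGens : Set (MvPolynomial (Fin 4) k) :=
  {X 0 ^ (d - 1) * X 1, X 0 ^ d + (d : MvPolynomial (Fin 4) k) * X 1 ^ (d - 1) * X 2,
    X 1 ^ d + (d : MvPolynomial (Fin 4) k) * X 2 ^ (d - 1) * X 3, X 2 ^ d}

def jacIdeal : Ideal (MvPolynomial (Fin 4) k) := Ideal.span (jacGens k d)

def socleGen : MvPolynomial (Fin 4) k := X 0 ^ (d - 1) * X 2 ^ (d - 1)

def satIdeal : Ideal (MvPolynomial (Fin 4) k) := jacIdeal k d ⊔ Ideal.span {socleGen k d}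

variable {k d}

lemma normalForm_C_mul_mon (r : k) (a b c e : ℕ) :
    normalForm k d (C r * mon a b c e) = r • nfMon k d a b c e := by
  rw [← monomial_exps, ← mul_one r, ← smul_eq_mul, ← smul_monomial, map_smul, normalForm,
    ← congrFun (coe_basisMonomials (Fin 4) k), Module.Basis.constr_basis]
  simp

lemma normalForm_X3_mul (s : MvPolynomial (Fin 4) k) :
    normalForm k d (X 3 * s) = X 3 * normalForm k d s := by
  induction s using induction_on_mon with
  | hmon r a b c e =>
    rw [show X 3 * (C r * mon a b c e) = C r * mon a b c (e + 1) by simp only [mon]; ring,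
      normalForm_C_mul_mon, normalForm_C_mul_mon, nfMon_w_succ, mul_smul_comm]
  | hadd p q hp hq => rw [mul_add, map_add, map_add, hp, hq, mul_add]

lemma mon_mem_satIdeal_of_reducible {a b c : ℕ} (h : Reducible d a b c) (e : ℕ) :
    mon a b c e ∈ satIdeal k d := by
  rcases h with hc | ⟨ha, hb | hc⟩
  · obtain ⟨c, rfl⟩ := Nat.exists_eq_add_of_le' hc
    rw [show mon a b (c + d) e = mon a b c e * X 2 ^ d by simp only [mon]; ring]
    exact Ideal.mul_mem_left _ _ (Ideal.mem_sup_left (Ideal.subset_span (by simp [jacGens])))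
  · obtain ⟨a, rfl⟩ := Nat.exists_eq_add_of_le' ha
    obtain ⟨b, rfl⟩ := Nat.exists_eq_add_of_le' hb
    rw [show mon (a + (d - 1)) (b + 1) c e = mon a b c e * (X 0 ^ (d - 1) * X 1) by
      simp only [mon]; ring]
    exact Ideal.mul_mem_left _ _ (Ideal.mem_sup_left (Ideal.subset_span (by simp [jacGens])))
  · obtain ⟨a, rfl⟩ := Nat.exists_eq_add_of_le' ha
    obtain ⟨c, rfl⟩ := Nat.exists_eq_add_of_le' hc
    rw [show mon (a + (d - 1)) b (c + (d - 1)) e = mon a b c e * socleGen k d by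
      simp only [mon, socleGen]; ring]
    exact Ideal.mul_mem_left _ _ (Ideal.mem_sup_right (Ideal.mem_span_singleton_self _))

lemma mon_sub_nfMon_mem_satIdeal (hd : 0 < d) (a b c e : ℕ) :
    mon a b c e - nfMon k d a b c e ∈ satIdeal k d := by
  induction hn : a + b using Nat.strong_induction_on generalizing a b c e with
  | _ n ih =>
  have hdC : (d : MvPolynomial (Fin 4) k) = C (d : k) := (map_natCast C d).symm
  rcases le_or_gt d a with ha | ha
  · obtain ⟨a, rfl⟩ := Nat.exists_eq_add_of_le' ha
    have hrec := ih _ (by omega) a (b + (d - 1)) (c + 1) e rfl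
    rw [show mon (a + d) b c e - nfMon k d (a + d) b c e =
        mon a b c e * (X 0 ^ d + (d : MvPolynomial (Fin 4) k) * X 1 ^ (d - 1) * X 2) -
          C (d : k) * (mon a (b + (d - 1)) (c + 1) e - nfMon k d a (b + (d - 1)) (c + 1) e) by
      rw [nfMon_x_add hd, neg_smul, smul_eq_C_mul, hdC]; simp only [mon]; ring]
    exact sub_mem
      (Ideal.mul_mem_left _ _ (Ideal.mem_sup_left (Ideal.subset_span (by simp [jacGens]))))
      (Ideal.mul_mem_left _ _ hrec)
  rcases le_or_gt d b with hb | hb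
  · obtain ⟨b, rfl⟩ := Nat.exists_eq_add_of_le' hb
    have hrec := ih _ (by omega) a b (c + (d - 1)) (e + 1) rfl
    rw [show mon a (b + d) c e - nfMon k d a (b + d) c e =
        mon a b c e * (X 1 ^ d + (d : MvPolynomial (Fin 4) k) * X 2 ^ (d - 1) * X 3) -
          C (d : k) * (mon a b (c + (d - 1)) (e + 1) - nfMon k d a b (c + (d - 1)) (e + 1)) by
      rw [nfMon_y_add hd, neg_smul, smul_eq_C_mul, hdC]; simp only [mon]; ring]
    exact sub_mem
      (Ideal.mul_mem_left _ _ (Ideal.mem_sup_left (Ideal.subset_span (by simp [jacGens]))))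
      (Ideal.mul_mem_left _ _ hrec)
  rw [nfMon_of_lt ha hb]
  split_ifs with h
  · simpa using mon_mem_satIdeal_of_reducible h e
  · simp

lemma sub_normalForm_mem_satIdeal (hd : 0 < d) (s : MvPolynomial (Fin 4) k) :
    s - normalForm k d s ∈ satIdeal k d := by
  induction s using induction_on_mon with
  | hmon r a b c e =>
    rw [normalForm_C_mul_mon, smul_eq_C_mul, ← mul_sub]
    exact Ideal.mul_mem_left _ _ (mon_sub_nfMon_mem_satIdeal hd a b c e)
  | hadd p q hp hq =>
    rw [map_add, add_sub_add_comm]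
    exact add_mem hp hq

lemma normalForm_mul_eq_zero (hd : 0 < d) {g : MvPolynomial (Fin 4) k}
    (hg : g ∈ insert (socleGen k d) (jacGens k d)) (h : MvPolynomial (Fin 4) k) :
    normalForm k d (h * g) = 0 := by
  have hdC : (d : MvPolynomial (Fin 4) k) = C (d : k) := (map_natCast C d).symm
  induction h using induction_on_mon with
  | hadd p q hp hq => rw [add_mul, map_add, hp, hq, add_zero]
  | hmon r a b c e =>
  rcases hg with rfl | rfl | rfl | rfl | rfl
  · rw [show C r * mon a b c e * socleGen k d = C r * mon (a + (d - 1)) b (c + (d - 1)) e by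
      simp only [mon, socleGen]; ring, normalForm_C_mul_mon,
      nfMon_eq_zero_of_reducible hd (Or.inr ⟨by omega, Or.inr (by omega)⟩), smul_zero]
  · rw [show C r * mon a b c e * (X 0 ^ (d - 1) * X 1) = C r * mon (a + (d - 1)) (b + 1) c e by
      simp only [mon]; ring, normalForm_C_mul_mon,
      nfMon_eq_zero_of_reducible hd (Or.inr ⟨by omega, Or.inl (by omega)⟩), smul_zero]
  · rw [show C r * mon a b c e * (X 0 ^ d + (d : MvPolynomial (Fin 4) k) * X 1 ^ (d - 1) * X 2)
        = C r * mon (a + d) b c e + C (r * d) * mon a (b + (d - 1)) (c + 1) e by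
      rw [map_mul, hdC]; simp only [mon]; ring,
      map_add, normalForm_C_mul_mon, normalForm_C_mul_mon, nfMon_x_add hd, smul_smul,
      ← add_smul, mul_neg, neg_add_cancel, zero_smul]
  · rw [show C r * mon a b c e * (X 1 ^ d + (d : MvPolynomial (Fin 4) k) * X 2 ^ (d - 1) * X 3)
        = C r * mon a (b + d) c e + C (r * d) * mon a b (c + (d - 1)) (e + 1) by
      rw [map_mul, hdC]; simp only [mon]; ring,
      map_add, normalForm_C_mul_mon, normalForm_C_mul_mon, nfMon_y_add hd, smul_smul,
      ← add_smul, mul_neg, neg_add_cancel, zero_smul]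
  · rw [show C r * mon a b c e * X 2 ^ d = C r * mon a b (c + d) e by simp only [mon]; ring,
      normalForm_C_mul_mon, nfMon_eq_zero_of_reducible hd (Or.inl (by omega)), smul_zero]

lemma mem_satIdeal_of_X3_mul_mem (hd : 0 < d) {s : MvPolynomial (Fin 4) k}
    (hs : X 3 * s ∈ satIdeal k d) : s ∈ satIdeal k d := by
  have hK : satIdeal k d = Ideal.span (insert (socleGen k d) (jacGens k d)) := by
    rw [satIdeal, jacIdeal, sup_comm, Ideal.span_insert]
  refine Ideal.mem_of_mul_mem_of_normalForm (normalForm k d) (fun t ht => ?_)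
    (sub_normalForm_mem_satIdeal hd) normalForm_X3_mul
    (mem_nonZeroDivisors_of_ne_zero (X_ne_zero 3)) hs
  rw [hK] at ht
  exact Ideal.map_eq_zero_of_mem_span (normalForm k d) (fun _ hg => normalForm_mul_eq_zero hd hg) ht

lemma X_mul_socleGen_mem_jacIdeal (hd : (d : k) ≠ 0) {v : MvPolynomial (Fin 4) k}
    (hv : v ∈ ({X 0, X 1, X 2, X 3} : Set (MvPolynomial (Fin 4) k))) :
    v * socleGen k d ∈ jacIdeal k d := by
  obtain ⟨n, rfl⟩ : ∃ n, d = n + 1 := Nat.exists_eq_add_one.mpr (Nat.pos_of_ne_zero (by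
    rintro rfl; simp at hd))
  have hgen {g} (hg : g ∈ jacGens k (n + 1)) : g ∈ jacIdeal k (n + 1) := Ideal.subset_span hg
  simp only [jacGens, socleGen, Nat.add_sub_cancel, Set.mem_insert_iff, Set.mem_singleton_iff,
    forall_eq_or_imp, forall_eq] at hgen ⊢
  obtain ⟨hxy, hx, hy, hz⟩ := hgen
  have hdC : ((n + 1 : ℕ) : MvPolynomial (Fin 4) k) = C ((n + 1 : ℕ) : k) :=
    (map_natCast C _).symm
  rcases hv with rfl | rfl | rfl | rfl
  · rw [show X 0 * (X 0 ^ n * X 2 ^ n) = X 2 ^ n * (X 0 ^ (n + 1) +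
        ((n + 1 : ℕ) : MvPolynomial (Fin 4) k) * X 1 ^ n * X 2) -
        ((n + 1 : ℕ) : MvPolynomial (Fin 4) k) * X 1 ^ n * X 2 ^ (n + 1) by ring]
    exact sub_mem (Ideal.mul_mem_left _ _ hx) (Ideal.mul_mem_left _ _ hz)
  · rw [show X 1 * (X 0 ^ n * X 2 ^ n) = X 2 ^ n * (X 0 ^ n * X 1 : MvPolynomial (Fin 4) k) by
      ring]
    exact Ideal.mul_mem_left _ _ hxy
  · rw [show X 2 * (X 0 ^ n * X 2 ^ n) = X 0 ^ n * (X 2 ^ (n + 1) : MvPolynomial (Fin 4) k) by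
      ring]
    exact Ideal.mul_mem_left _ _ hz
  · rw [← Ideal.unit_mul_mem_iff_mem _ ((Ne.isUnit hd).map C), ← hdC,
      show ((n + 1 : ℕ) : MvPolynomial (Fin 4) k) * (X 3 * (X 0 ^ n * X 2 ^ n)) =
        X 0 ^ n * (X 1 ^ (n + 1) + ((n + 1 : ℕ) : MvPolynomial (Fin 4) k) * X 2 ^ n * X 3) -
          X 1 ^ n * (X 0 ^ n * X 1) by ring]
    exact sub_mem (Ideal.mul_mem_left _ _ hy) (Ideal.mul_mem_left _ _ hxy)

lemma span_X_mul_satIdeal_le (hd : (d : k) ≠ 0) :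
    Ideal.span {X 0, X 1, X 2, X 3} * satIdeal k d ≤ jacIdeal k d := by
  rw [satIdeal, Ideal.mul_sup, Ideal.span_mul_span']
  refine sup_le Ideal.mul_le_right (Ideal.span_le.mpr ?_)
  rintro _ ⟨v, hv, _, rfl, rfl⟩
  exact X_mul_socleGen_mem_jacIdeal hd hv

lemma span_range_pderiv_eq_jacIdeal (hd : (d : k) ≠ 0) :
    Ideal.span (Set.range fun i : Fin 4 =>
      pderiv i (X 0 ^ d * X 1 + X 1 ^ d * X 2 + X 2 ^ d * X 3 : MvPolynomial (Fin 4) k)) =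
    jacIdeal k d := by
  have hpderiv : (fun i : Fin 4 =>
      pderiv i (X 0 ^ d * X 1 + X 1 ^ d * X 2 + X 2 ^ d * X 3 : MvPolynomial (Fin 4) k)) =
      ![(d : MvPolynomial (Fin 4) k) * (X 0 ^ (d - 1) * X 1),
        X 0 ^ d + (d : MvPolynomial (Fin 4) k) * X 1 ^ (d - 1) * X 2,
        X 1 ^ d + (d : MvPolynomial (Fin 4) k) * X 2 ^ (d - 1) * X 3, X 2 ^ d] := by
    funext i
    fin_cases i <;> simp [pderiv_X] <;> ring
  have hunit : IsUnit (d : MvPolynomial (Fin 4) k) := by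
    simpa using (Ne.isUnit hd).map (C : k →+* MvPolynomial (Fin 4) k)
  simp only [hpderiv, Matrix.range_cons, Matrix.range_empty, Set.union_empty,
    Set.singleton_union]
  rw [jacIdeal, jacGens, Ideal.span_insert, Ideal.span_insert (X 0 ^ (d - 1) * X 1),
    Ideal.span_singleton_mul_left_unit hunit]

lemma socleGen_notMem_jacIdeal (hd : d ≠ 0) : socleGen k d ∉ jacIdeal k d := by
  let μ := exps (d - 1) 0 (d - 1) 0
  have hgen : ∀ g ∈ jacGens k d, ∀ h, coeffAddMonoidHom μ (h * g) = 0 := by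
    intro g hg h
    rw [coeffAddMonoidHom_apply]
    rcases hg with rfl | rfl | rfl | rfl
    · rw [show X 0 ^ (d - 1) * X 1 = (mon (d - 1) 1 0 0 : MvPolynomial (Fin 4) k) by simp [mon]]
      exact coeff_mul_mon_eq_zero (by rw [exps_le_exps_iff]; omega) h
    · rw [show h * (X 0 ^ d + (d : MvPolynomial (Fin 4) k) * X 1 ^ (d - 1) * X 2) =
          h * mon d 0 0 0 + (h * (d : MvPolynomial (Fin 4) k)) * mon 0 (d - 1) 1 0 by
        simp only [mon]; ring, coeff_add,
        coeff_mul_mon_eq_zero (by rw [exps_le_exps_iff]; omega),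
        coeff_mul_mon_eq_zero (by rw [exps_le_exps_iff]; omega), add_zero]
    · rw [show h * (X 1 ^ d + (d : MvPolynomial (Fin 4) k) * X 2 ^ (d - 1) * X 3) =
          h * mon 0 d 0 0 + (h * (d : MvPolynomial (Fin 4) k)) * mon 0 0 (d - 1) 1 by
        simp only [mon]; ring, coeff_add,
        coeff_mul_mon_eq_zero (by rw [exps_le_exps_iff]; omega),
        coeff_mul_mon_eq_zero (by rw [exps_le_exps_iff]; omega), add_zero]
    · rw [show X 2 ^ d = (mon 0 0 d 0 : MvPolynomial (Fin 4) k) by simp [mon]]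
      exact coeff_mul_mon_eq_zero (by rw [exps_le_exps_iff]; omega) h
  intro hmem
  have := Ideal.map_eq_zero_of_mem_span (coeffAddMonoidHom μ) hgen hmem
  rw [socleGen, show X 0 ^ (d - 1) * X 2 ^ (d - 1) =
      (mon (d - 1) 0 (d - 1) 0 : MvPolynomial (Fin 4) k) by simp [mon],
    mon_eq_monomial, coeffAddMonoidHom_apply, coeff_monomial, if_pos rfl] at this
  exact one_ne_zero this

end

end ChainPolynomial

theorem saturation_and_socle_of_gradient_ideal_general
    (k : Type) [Field k] (d : ℕ) (hchar : (d : k) ≠ 0)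
    (x y z w f : MvPolynomial (Fin 4) k)
    (hx : x = X 0) (hy : y = X 1) (hz : z = X 2) (hw : w = X 3)
    (hf : f = x ^ d * y + y ^ d * z + z ^ d * w)
    (J m : Ideal (MvPolynomial (Fin 4) k))
    (hJ : J = Ideal.span {x ^ (d - 1) * y,
      x ^ d + (d : MvPolynomial (Fin 4) k) * y ^ (d - 1) * z,
      y ^ d + (d : MvPolynomial (Fin 4) k) * z ^ (d - 1) * w, z ^ d})
    (hm : m = Ideal.span {x, y, z, w}) :
    Ideal.span (Set.range fun i : Fin 4 => MvPolynomial.pderiv i f) = J ∧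
    (∀ s : MvPolynomial (Fin 4) k,
      (∃ N : ℕ, ∀ g ∈ m ^ N, g * s ∈ J) ↔
        s ∈ J ⊔ Ideal.span {x ^ (d - 1) * z ^ (d - 1)}) ∧
    (∀ s : MvPolynomial (Fin 4) k,
      (∀ g ∈ m, g * s ∈ J) ↔ s ∈ J ⊔ Ideal.span {x ^ (d - 1) * z ^ (d - 1)}) ∧
    MvPolynomial.IsHomogeneous (x ^ (d - 1) * z ^ (d - 1)) (2 * d - 2) ∧
    x ^ (d - 1) * z ^ (d - 1) ∉ J := by
  subst hx hy hz hw hf hJ hm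
  have hd : d ≠ 0 := by rintro rfl; simp at hchar
  have hJK : ChainPolynomial.jacIdeal k d ≤ ChainPolynomial.satIdeal k d := le_sup_left
  have hmK := ChainPolynomial.span_X_mul_satIdeal_le hchar
  have hw : X 3 ∈ Ideal.span ({X 0, X 1, X 2, X 3} : Set (MvPolynomial (Fin 4) k)) :=
    Ideal.subset_span (by simp)
  have hreg (s) :=
    ChainPolynomial.mem_satIdeal_of_X3_mul_mem (k := k) (s := s) (Nat.pos_of_ne_zero hd)
  refine ⟨ChainPolynomial.span_range_pderiv_eq_jacIdeal hchar,
    Ideal.exists_forall_pow_mul_mem_iff_of_regular hJK hmK hw hreg,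
    Ideal.forall_mul_mem_iff_of_regular hJK hmK hw hreg, ?_,
    ChainPolynomial.socleGen_notMem_jacIdeal hd⟩
  convert (isHomogeneous_X_pow _ _).mul (isHomogeneous_X_pow _ _) using 1
  omega

/-- Let `d ≥ 2` with `char(k) ∤ d`, and let
`f = x^d y + y^d z + z^d w ∈ S = k[x,y,z,w]`, with gradient ideal
`J = (x^{d−1}y, x^d + d y^{d−1}z, y^d + d z^{d−1}w, z^d)` (the span of the partial
derivatives of `f`).  Then the saturation `J^sat = J : (x,y,z,w)^∞` equals
`(J, x^{d−1}z^{d−1})`, and `J^sat/J` is the socle of `S/J` (i.e. `J : (x,y,z,w) = J^sat`),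
so the socle degree of `S/J` is `2d − 2`: the fresh socle generator `x^{d−1}z^{d−1}` is
homogeneous of degree `2d − 2` and does not lie in `J`. -/
theorem saturation_and_socle_of_gradient_ideal
    (k : Type) [Field k] (d : ℕ) (hd : 2 ≤ d) (hchar : (d : k) ≠ 0)
    (x y z w f : MvPolynomial (Fin 4) k)
    (hx : x = X 0) (hy : y = X 1) (hz : z = X 2) (hw : w = X 3)
    (hf : f = x ^ d * y + y ^ d * z + z ^ d * w)
    (J m : Ideal (MvPolynomial (Fin 4) k))
    (hJ : J = Ideal.span {x ^ (d - 1) * y,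
      x ^ d + (d : MvPolynomial (Fin 4) k) * y ^ (d - 1) * z,
      y ^ d + (d : MvPolynomial (Fin 4) k) * z ^ (d - 1) * w, z ^ d})
    (hm : m = Ideal.span {x, y, z, w}) :
    Ideal.span (Set.range fun i : Fin 4 => MvPolynomial.pderiv i f) = J ∧
    (∀ s : MvPolynomial (Fin 4) k,
      (∃ N : ℕ, ∀ g ∈ m ^ N, g * s ∈ J) ↔
        s ∈ J ⊔ Ideal.span {x ^ (d - 1) * z ^ (d - 1)}) ∧
    (∀ s : MvPolynomial (Fin 4) k,
      (∀ g ∈ m, g * s ∈ J) ↔ s ∈ J ⊔ Ideal.span {x ^ (d - 1) * z ^ (d - 1)}) ∧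
    MvPolynomial.IsHomogeneous (x ^ (d - 1) * z ^ (d - 1)) (2 * d - 2) ∧
    x ^ (d - 1) * z ^ (d - 1) ∉ J :=
  saturation_and_socle_of_gradient_ideal_general k d hchar x y z w f hx hy hz hw hf J m hJ hm
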